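/- The discretized objectives satisfy V_LP = h^T(α T + (1/2) a T²) − V_LP1 for every feasible discrete solution, where V_LP = ∑_{n=1}^N (τ g^T u[n] + 0.5 h^T (x[n] + x[n−1])) and V_LP1 = ∑_{n=1}^N (τ γ^T u[n] + τ c^T (T − τ(n − 0.5)) u[n]) with γ = −g, c^T = h^T G, provided the finite-difference constraints τ G u[n] + x[n] − x[n−1] = τ a with x[0] = α hold. -/
import Mathlib


open Matrix

/-- The discretized objectives satisfy V_LP = hᵀ(αT + aT²/2) − V_LP1 for every
feasible discrete solution, where γ = −g and cᵀ = hᵀG and the finite-difference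
constraints hold. -/
theorem discrete_objective_identity
    (K J N : ℕ) (hN : 0 < N)
    (G : Matrix (Fin K) (Fin J) ℝ) (α a h : Fin K → ℝ) (g : Fin J → ℝ)
    (T : ℝ) (hT : 0 < T) (τ : ℝ) (hτ : τ = T / N)
    (γ : Fin J → ℝ) (hγ : γ = -g)
    (c : Fin J → ℝ) (hc : c = Matrix.vecMul h G)
    (u : ℕ → Fin J → ℝ) (x : ℕ → Fin K → ℝ)
    (hx0 : x 0 = α)
    (hrec : ∀ n : ℕ, 1 ≤ n → n ≤ N →
        τ • G.mulVec (u n) + x n - x (n - 1) = τ • a)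
    (VLP VLP1 : ℝ)
    (hVLP : VLP = ∑ n ∈ Finset.range N,
        τ * (g ⬝ᵥ u (n + 1) + 0.5 * (h ⬝ᵥ (x (n + 1) + x n))))
    (hVLP1 : VLP1 = ∑ n ∈ Finset.range N,
        (τ * (γ ⬝ᵥ u (n + 1)) + τ * (T - τ * (((n : ℝ) + 1) - 0.5)) * (c ⬝ᵥ u (n + 1)))) :
    VLP = h ⬝ᵥ (T • α + (T ^ 2 / 2) • a) - VLP1 := by
  have hNR : (N : ℝ) ≠ 0 := Nat.cast_ne_zero.mpr hN.ne'
  have hτN : τ * N = T := by rw [hτ]; field_simp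
  have key : ∀ n < N, (c ⬝ᵥ u (n + 1)) * τ =
      h ⬝ᵥ x n - h ⬝ᵥ x (n + 1) + τ * (h ⬝ᵥ a) := by
    intro n hn
    have h1 := hrec (n + 1) (Nat.le_add_left 1 n) hn
    have h2 := congrArg (fun v => h ⬝ᵥ v) h1
    simp only [Nat.add_sub_cancel, dotProduct_add, dotProduct_sub, dotProduct_smul,
      dotProduct_mulVec, smul_eq_mul, ← hc] at h2
    linarith
  set D : ℕ → ℝ := fun n =>
    (T - τ * n) * (h ⬝ᵥ x n) - (τ * T * n - τ ^ 2 * n ^ 2 / 2) * (h ⬝ᵥ a) with hD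
  rw [eq_sub_iff_add_eq, hVLP, hVLP1, ← Finset.sum_add_distrib]
  have hterm : ∀ n ∈ Finset.range N,
      τ * (g ⬝ᵥ u (n + 1) + 0.5 * (h ⬝ᵥ (x (n + 1) + x n))) +
        (τ * (γ ⬝ᵥ u (n + 1)) + τ * (T - τ * (((n : ℝ) + 1) - 0.5)) * (c ⬝ᵥ u (n + 1)))
      = D n - D (n + 1) := by
    intro n hn
    have hk := key n (Finset.mem_range.mp hn)
    simp only [hD, hγ, neg_dotProduct, dotProduct_add, Nat.cast_add, Nat.cast_one]
    linear_combination (T - τ * ((n : ℝ) + 1 - 0.5)) * hk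
  rw [Finset.sum_congr rfl hterm, Finset.sum_range_sub' D N]
  simp only [hD, Nat.cast_zero, hx0, dotProduct_add, dotProduct_smul, smul_eq_mul]
  linear_combination (h ⬝ᵥ x N - (τ * (N : ℝ) - T) * (h ⬝ᵥ a) / 2) * hτN
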